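/- For any scattered space (X, τ) and any ordinal λ, the space (X, τ_λ) is scattered and its rank function is ℓ^λ ∘ ρ_τ, i.e., ρ_{τ_λ}(x) = ℓ^λ(ρ_τ(x)) for every x ∈ X. -/

import Mathlib

open Ordinal Set

noncomputable section

universe u

/-! ## Basic topological notions (explicit topologies) -/

/-- The derived set (set of limit points) of `A` w.r.t. the topology `t`. -/
def dSet {X : Type u} (t : TopologicalSpace X) (A : Set X) : Set X :=
  {x | ∀ U : Set X, t.IsOpen U → x ∈ U → ∃ y, y ∈ U ∩ A ∧ y ≠ x}

/-- Transfinite iterates of the derived-set operator, starting from the whole space. -/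
def dIter {X : Type u} (t : TopologicalSpace X) (o : Ordinal.{u}) : Set X :=
  Ordinal.limitRecOn o Set.univ (fun _ ih => dSet t ih)
    (fun o _ ih => ⋂ (o' : Ordinal.{u}) (h : o' < o), ih o' h)

/-- The Cantor–Bendixson rank of a point: the least `ξ` with `x ∉ d^{ξ+1} X`. -/
def ptRank {X : Type u} (t : TopologicalSpace X) (x : X) : Ordinal.{u} :=
  sInf {ξ : Ordinal.{u} | x ∉ dIter t (ξ + 1)}

/-- The rank of a space: `sup_{x ∈ X} (ρ(x) + 1)`. -/
def spRank (X : Type u) (t : TopologicalSpace X) : Ordinal.{u} :=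
  ⨆ x : X, ptRank t x + 1

/-- A space is scattered if every nonempty subset has an isolated point. -/
def IsScattered {X : Type u} (t : TopologicalSpace X) : Prop :=
  ∀ A : Set X, A.Nonempty → ∃ x ∈ A, ∃ U : Set X, t.IsOpen U ∧ U ∩ A = {x}

/-- A `d`-map: continuous, open and pointwise discrete. -/
def IsDMap {X : Type u} {Y : Type*} (t : TopologicalSpace X) (s : TopologicalSpace Y)
    (f : X → Y) : Prop :=
  @Continuous _ _ t s f ∧ @IsOpenMap _ _ t s f ∧
    ∀ y : Y, ∀ x : X, f x = y →
      ∃ U : Set X, t.IsOpen U ∧ x ∈ U ∧ ∀ z ∈ U, f z = y → z = x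

/-! ## Hyperexponentials and hyperlogarithms -/

/-- The exponential `e ξ = -1 + ω^ξ`. -/
def eFun (x : Ordinal.{u}) : Ordinal.{u} := ω ^ x - 1

/-- `E` is the family of hyperexponentials: a family of normal functions with `E 1 = e`,
`E (α+β) = E α ∘ E β`, pointwise minimal among all such families. -/
def IsHyperexpFamily (E : Ordinal.{u} → Ordinal.{u} → Ordinal.{u}) : Prop :=
  (∀ a, Order.IsNormal (E a)) ∧ E 1 = eFun ∧ (∀ a b, E (a + b) = E a ∘ E b) ∧
    ∀ F : Ordinal.{u} → Ordinal.{u} → Ordinal.{u},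
      (∀ a, Order.IsNormal (F a)) → F 1 = eFun → (∀ a b, F (a + b) = F a ∘ F b) →
        ∀ a b, E a b ≤ F a b

/-- The end logarithm: `ℓ 0 = 0` and `ℓ ξ` is the unique `β` with `ξ = α + ω^β`. -/
def ellFun (x : Ordinal.{u}) : Ordinal.{u} :=
  if x = 0 then 0 else sInf {b : Ordinal.{u} | ∃ a, x = a + ω ^ b}

/-- An initial function maps initial segments onto initial segments. -/
def IsInitialFun (f : Ordinal.{u} → Ordinal.{u}) : Prop :=
  ∀ o : Ordinal.{u}, ∃ o' : Ordinal.{u}, f '' Set.Iio o = Set.Iio o'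

/-- `L` is the family of hyperlogarithms: a family of initial functions with `L 1 = ℓ`,
`L (α+β) = L β ∘ L α`, pointwise maximal among all such families. -/
def IsHyperlogFamily (L : Ordinal.{u} → Ordinal.{u} → Ordinal.{u}) : Prop :=
  (∀ a, IsInitialFun (L a)) ∧ L 1 = ellFun ∧ (∀ a b, L (a + b) = L b ∘ L a) ∧
    ∀ M : Ordinal.{u} → Ordinal.{u} → Ordinal.{u},
      (∀ a, IsInitialFun (M a)) → M 1 = ellFun → (∀ a b, M (a + b) = M b ∘ M a) →
        ∀ a b, M a b ≤ L a b

/-! ## Icard topologies -/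

/-- The generalized Icard topology `τ_λ` based on a space `(X, t)`, relative to a family `L`
of hyperlogarithms: the least topology containing `t` and all sets
`(α, β]_ξ = {x | α < ℓ^ξ ρ_t(x) ≤ β}` (including `α = -1`, i.e. `[0, β]_ξ`), for `ξ < λ`. -/
def IcardTop {X : Type u} (L : Ordinal.{u} → Ordinal.{u} → Ordinal.{u})
    (t : TopologicalSpace X) (lam : Ordinal.{u}) : TopologicalSpace X :=
  t ⊓ TopologicalSpace.generateFrom
    {S : Set X | ∃ ξ < lam,
      (∃ b : Ordinal.{u}, S = {x | L ξ (ptRank t x) ≤ b}) ∨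
      (∃ a b : Ordinal.{u}, a < b ∧ S = {x | a < L ξ (ptRank t x) ∧ L ξ (ptRank t x) ≤ b})}

/-! ## Ordinal spaces -/

/-- The ordinal corresponding to a point of `Θ.ToType`. -/
def ordVal {Θ : Ordinal.{u}} (x : Θ.ToType) : Ordinal.{u} :=
  @Ordinal.typein Θ.ToType (· < ·) isWellOrder_lt x

/-- The left topology `I₀` on (the canonical type of order type) `Θ`, generated by the
intervals `[0, β]`. -/
def leftTop (Θ : Ordinal.{u}) : TopologicalSpace Θ.ToType :=
  TopologicalSpace.generateFrom {S : Set Θ.ToType | ∃ b : Θ.ToType, S = Set.Iic b}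

/-- The interval topology `I₁` on `Θ`, generated by the sets `[0, β]` and `(α, β]`. -/
def intervalTop (Θ : Ordinal.{u}) : TopologicalSpace Θ.ToType :=
  TopologicalSpace.generateFrom
    {S : Set Θ.ToType | (∃ b, S = Set.Iic b) ∨ ∃ a b : Θ.ToType, S = Set.Ioc a b}

/-- The Icard topology `I_λ = (I₀)_λ` on the ordinal `Θ`: the least topology containing the
left topology and all sets `{x < Θ | α < ℓ^ξ x ≤ β}` for `ξ < λ`. -/
def ordIcard (L : Ordinal.{u} → Ordinal.{u} → Ordinal.{u}) (Θ lam : Ordinal.{u}) :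
    TopologicalSpace Θ.ToType :=
  leftTop Θ ⊓ TopologicalSpace.generateFrom
    {S : Set Θ.ToType | ∃ ξ < lam,
      (∃ b : Ordinal.{u}, S = {x | L ξ (ordVal x) ≤ b}) ∨
      (∃ a b : Ordinal.{u}, a < b ∧ S = {x | a < L ξ (ordVal x) ∧ L ξ (ordVal x) ≤ b})}

/-! ## Modal logic: GL and topological (d-)semantics -/

/-- Formulas of the basic modal language. -/
inductive Fml : Type
  | bot : Fml
  | var : ℕ → Fml
  | imp : Fml → Fml → Fml
  | box : Fml → Fml

namespace Fml

/-- Negation. -/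
def neg (p : Fml) : Fml := p.imp .bot

/-- Diamond. -/
def dia (p : Fml) : Fml := (p.neg.box).neg

end Fml

/-- The valuation determined by an assignment `V` of sets to propositional variables, in the
`d`-semantics: `⟦◇φ⟧ = d⟦φ⟧`, i.e. `⟦◻φ⟧` is the complement of the derived set of the
complement of `⟦φ⟧`. -/
def fval {X : Type u} (t : TopologicalSpace X) (V : ℕ → Set X) : Fml → Set X
  | .bot => ∅
  | .var n => V n
  | .imp p q => (fval t V p)ᶜ ∪ fval t V q
  | .box p => (dSet t (fval t V p)ᶜ)ᶜ

/-- Classical tautologies (boxed formulas and variables treated as atoms). -/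
def Tautology (φ : Fml) : Prop :=
  ∀ v : Fml → Bool, v .bot = false → (∀ p q : Fml, v (p.imp q) = (!(v p) || v q)) →
    v φ = true

/-- Provability in the Gödel–Löb provability logic `GL`. -/
inductive GLProv : Fml → Prop
  | taut {φ : Fml} : Tautology φ → GLProv φ
  | axK (p q : Fml) : GLProv (((p.imp q).box).imp ((p.box).imp q.box))
  | axLob (p : Fml) : GLProv ((((p.box).imp p).box).imp p.box)
  | mp {p q : Fml} : GLProv (p.imp q) → GLProv p → GLProv q
  | nec {p : Fml} : GLProv p → GLProv p.box

/-- A set of formulas is GL-consistent if no finite conjunction of its members provably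
implies `⊥`. -/
def GLConsistent (Γ : Set Fml) : Prop :=
  ¬ ∃ l : List Fml, (∀ φ ∈ l, φ ∈ Γ) ∧ GLProv (l.foldr .imp .bot)

/-- `Γ` is satisfied in the space `(X, t)`. -/
def SatisfiedIn {X : Type u} (t : TopologicalSpace X) (Γ : Set Fml) : Prop :=
  ∃ (V : ℕ → Set X) (x : X), ∀ φ ∈ Γ, x ∈ fval t V φ

/-- `GL` is strongly complete with respect to `(X, t)`. -/
def StronglyCompleteFor {X : Type u} (t : TopologicalSpace X) : Prop :=
  ∀ Γ : Set Fml, GLConsistent Γ → SatisfiedIn t Γ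

/-- Validity of a formula in a space under the `d`-semantics. -/
def ValidIn {X : Type u} (t : TopologicalSpace X) (φ : Fml) : Prop :=
  ∀ V : ℕ → Set X, fval t V φ = Set.univ

/-! ## Trees and ω-bouquets -/

/-- The upset topology of a relation: opens are the `R`-upward closed sets. -/
def upTop {T : Type u} (R : T → T → Prop) : TopologicalSpace T where
  IsOpen U := ∀ x ∈ U, ∀ y, R x y → y ∈ U
  isOpen_univ := fun x _ y _ => trivial
  isOpen_inter := fun s t hs ht x hx y hR => ⟨hs x hx.1 y hR, ht x hx.2 y hR⟩
  isOpen_sUnion := fun S hS x hx y hR => by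
    obtain ⟨s, hsS, hxs⟩ := hx
    exact ⟨s, hsS, hS s hsS x hxs y hR⟩

/-- A countable, converse well-founded tree. -/
structure IsOmegaTree {T : Type u} (R : T → T → Prop) : Prop where
  countable : Countable T
  trans : ∀ a b c, R a b → R b c → R a c
  irrefl : ∀ a, ¬ R a a
  predWellOrdered : ∀ t : T, IsWellOrder {s : T // R s t} (fun a b => R a.1 b.1)
  root : ∃! r : T, ∀ s : T, ¬ R s r
  converseWellFounded : WellFounded (fun a b : T => R b a)

/-- The daughters (immediate successors) of a node. -/
def daughters {T : Type u} (R : T → T → Prop) (w : T) : Set T :=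
  {v | R w v ∧ ¬ ∃ u, R w u ∧ R u v}

/-- The bouquet topology `σ_R`: the least topology extending the upset topology such that
whenever `w` has limit rank, `(v_i)` enumerates the daughters of `w` without repetition and
`n < ω`, the set `{w} ∪ ⋃_{i > n} ({v_i} ∪ R(v_i))` is open. -/
def sigmaTop {T : Type u} (R : T → T → Prop) : TopologicalSpace T :=
  upTop R ⊓ TopologicalSpace.generateFrom
    {S : Set T | ∃ w : T, Order.IsSuccLimit (ptRank (upTop R) w) ∧
      ∃ v : ℕ → T, Function.Injective v ∧ Set.range v = daughters R w ∧
        ∃ n : ℕ, S = {w} ∪ ⋃ (i : ℕ) (_ : n < i), ({v i} ∪ {u | R (v i) u})}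

/-! ## The club topology (via its neighborhood characterization) -/

/-- `C` is a club in (i.e. a closed unbounded subset of) the point `x`. -/
def IsClubIn {Θ : Ordinal.{u}} (C : Set Θ.ToType) (x : Θ.ToType) : Prop :=
  (∀ y ∈ C, y < x) ∧ (∀ z, z < x → ∃ y ∈ C, z < y) ∧
    ∀ z, z < x → (∃ w, w < z) → (∀ w, w < z → ∃ y ∈ C, w < y ∧ y < z) → z ∈ C

/-- `t` is the club topology on `Θ`: a set `U` is a neighborhood of a point `x ∈ U` iff
`U` contains a club in `x` or `cf(x) < ℵ₁`. -/
def IsClubTop (Θ : Ordinal.{u}) (t : TopologicalSpace Θ.ToType) : Prop :=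
  ∀ (U : Set Θ.ToType) (x : Θ.ToType), x ∈ U →
    (U ∈ @nhds _ t x ↔
      (Ordinal.cof (ordVal x) < Cardinal.aleph 1 ∨ ∃ C ⊆ U, IsClubIn C x))

/-!
A function `f : X → Ordinal` is the Cantor–Bendixson rank of a topology iff every point `x` has
a neighbourhood in which all other points have smaller `f`-value, while every neighbourhood of
`x` contains, for each `η < f x`, a point `y ≠ x` with `η ≤ f y`. The Icard topology refines `τ`
by the `ρ_τ`-preimages of *windows*, the finite intersections of the sets `{ℓ^ξ ∈ (α, β]}` with
`ξ < λ`. So it suffices that around every `ρ` some window makes `ℓ^λ` smaller than `ℓ^λ ρ` to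
the left of `ρ`, and that `ℓ^λ` maps every window around `ρ`, to the left of `ρ`, onto all
values below `ℓ^λ ρ`.

Both properties are proved by induction along the Cantor normal form of `λ`. They compose along
`λ = γ + δ`, since a window of level `γ + δ` is a window of level `γ` intersected with the
`ℓ^γ`-preimage of a window of level `δ`, and they hold for `λ = 0, 1` by inspection of `ℓ`. For
`λ = ω^e` with `e ≠ 0` and `ρ` moved by some `ℓ^ζ`, `ζ < λ`, they follow from the case of
`ℓ^ζ ρ < ρ`, because `ζ + λ = λ`. At the remaining points, fixed by all `ℓ^ζ`, `ζ < λ`, the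
maximality of the hyperlogarithms enters: comparison with an explicitly constructed family shows
that `ℓ^{ω^e}` enumerates these common fixed points, hence is strictly increasing on them.
-/

open FiniteInter TopologicalSpace Topology

/-! ### Cantor–Bendixson ranks -/

section CantorBendixson

variable {X : Type u} {t : TopologicalSpace X}

theorem dSet_mono {A B : Set X} (h : A ⊆ B) : dSet t A ⊆ dSet t B := fun _ hx U hU hxU =>
  (hx U hU hxU).imp fun _ hy => ⟨⟨hy.1.1, h hy.1.2⟩, hy.2⟩

theorem dIter_zero : dIter t 0 = Set.univ := Ordinal.limitRecOn_zero _ _ _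

theorem dIter_add_one (o : Ordinal.{u}) : dIter t (o + 1) = dSet t (dIter t o) :=
  Ordinal.limitRecOn_add_one _ _ _ _

theorem dIter_limit {o : Ordinal.{u}} (ho : Order.IsSuccLimit o) :
    dIter t o = ⋂ o' < o, dIter t o' :=
  Ordinal.limitRecOn_limit _ _ _ _ ho

theorem dIter_antitone : Antitone (dIter t) := by
  intro ζ ξ h
  induction ζ using Ordinal.limitRecOn generalizing ξ with
  | zero => exact (dIter_zero (t := t)).symm ▸ subset_univ _
  | add_one b ih =>
    induction ξ using Ordinal.limitRecOn with
    | zero => exact absurd h (by simp)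
    | add_one c _ =>
      rw [dIter_add_one, dIter_add_one]
      exact dSet_mono (ih (Order.lt_add_one_iff.1 (Order.add_one_le_iff.1 h)))
    | limit o ho _ =>
      rw [dIter_limit ho]
      exact biInter_subset_of_mem (ho.add_one_lt (Order.add_one_le_iff.1 h))
  | limit o ho ih =>
    rw [dIter_limit ho]
    exact subset_iInter₂ fun o' ho' => ih o' ho' (ho'.le.trans h)

theorem exists_dIter_add_one_eq (t : TopologicalSpace X) :
    ∃ ξ : Ordinal.{u}, dIter t (ξ + 1) = dIter t ξ := by
  by_contra! h
  have hanti : StrictAnti (dIter t) := fun ζ ξ hζξ =>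
    (dIter_antitone (Order.add_one_le_of_lt hζξ)).trans_lt
      (lt_of_le_of_ne (dIter_antitone (le_add_right le_rfl)) (h ζ))
  exact not_small_ordinal.{u} (small_of_injective hanti.injective)

theorem IsScattered.exists_dIter_eq_empty (hscat : IsScattered t) :
    ∃ ξ : Ordinal.{u}, dIter t ξ = ∅ := by
  obtain ⟨ξ, hξ⟩ := exists_dIter_add_one_eq t
  refine ⟨ξ, not_nonempty_iff_eq_empty.1 fun hne => ?_⟩
  obtain ⟨x, -, U, hU, hUx⟩ := hscat _ hne
  have hx : x ∈ U ∩ dIter t ξ := hUx ▸ mem_singleton x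
  have hxd : x ∈ dSet t (dIter t ξ) := by
    rw [← dIter_add_one, hξ]
    exact hx.2
  obtain ⟨y, hy, hyx⟩ := hxd U hU hx.1
  exact hyx (show y ∈ ({x} : Set X) from hUx ▸ hy)

theorem IsScattered.mem_dIter_add_one_iff (hscat : IsScattered t) {x : X} {ζ : Ordinal.{u}} :
    x ∈ dIter t (ζ + 1) ↔ ζ < ptRank t x := by
  have hne : {ξ | x ∉ dIter t (ξ + 1)}.Nonempty := by
    obtain ⟨ξ, hξ⟩ := hscat.exists_dIter_eq_empty
    exact ⟨ξ, fun hx => (hξ ▸ dIter_antitone (le_add_right le_rfl) hx : x ∈ (∅ : Set X))⟩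
  refine ⟨fun hx => lt_of_not_ge fun hle => csInf_mem hne ?_,
    fun h => by_contra fun hx => (csInf_le' hx).not_gt h⟩
  exact dIter_antitone (add_le_add_left hle 1) hx

theorem dIter_eq_setOf_le {f : X → Ordinal.{u}}
    (hsucc : ∀ a, dIter t a = {x | a ≤ f x} → dIter t (a + 1) = {x | a + 1 ≤ f x})
    (ξ : Ordinal.{u}) : dIter t ξ = {x | ξ ≤ f x} := by
  induction ξ using Ordinal.limitRecOn with
  | zero => simp [dIter_zero]
  | add_one a ih => exact hsucc a ih
  | limit o ho ih =>
    ext x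
    rw [dIter_limit ho, mem_iInter₂, mem_ofPred_eq, ho.le_iff_forall_le]
    exact forall₂_congr fun o' ho' => by rw [ih o' ho', mem_ofPred_eq]

structure IsCBRank (t : TopologicalSpace X) (f : X → Ordinal.{u}) : Prop where
  exists_isOpen_lt : ∀ x, ∃ U, IsOpen[t] U ∧ x ∈ U ∧ ∀ y ∈ U, y ≠ x → f y < f x
  exists_le_of_lt : ∀ x U, IsOpen[t] U → x ∈ U → ∀ η < f x, ∃ y ∈ U, y ≠ x ∧ η ≤ f y

theorem isCBRank_iff {f : X → Ordinal.{u}} :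
    IsCBRank t f ↔ ∀ ξ, dIter t ξ = {x | ξ ≤ f x} := by
  constructor
  · refine fun hf => dIter_eq_setOf_le fun a ha => ?_
    ext x
    rw [dIter_add_one, ha, mem_ofPred_eq, Order.add_one_le_iff]
    constructor
    · intro hx
      obtain ⟨U, hU, hxU, hlt⟩ := hf.exists_isOpen_lt x
      obtain ⟨y, ⟨hyU, hya⟩, hyx⟩ := hx U hU hxU
      exact lt_of_le_of_lt hya (hlt y hyU hyx)
    · intro hax U hU hxU
      obtain ⟨y, hyU, hyx, hay⟩ := hf.exists_le_of_lt x U hU hxU a hax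
      exact ⟨y, ⟨hyU, hay⟩, hyx⟩
  · intro h
    refine ⟨fun x => ?_, fun x U hU hxU η hη => ?_⟩
    · have hx : x ∉ dSet t {y | f x ≤ f y} := by
        rw [← h, ← dIter_add_one, h, mem_ofPred_eq, Order.add_one_le_iff]
        exact lt_irrefl _
      simp only [dSet, mem_ofPred_eq, not_forall, not_exists, not_and, not_not] at hx
      obtain ⟨U, hU, hxU, hU'⟩ := hx
      exact ⟨U, hU, hxU, fun y hyU hyx => lt_of_not_ge fun hle => hyx (hU' y ⟨hyU, hle⟩)⟩
    · have hx : x ∈ dSet t {y | η ≤ f y} := by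
        rw [← h, ← dIter_add_one, h, mem_ofPred_eq, Order.add_one_le_iff]
        exact hη
      obtain ⟨y, ⟨hyU, hy⟩, hyx⟩ := hx U hU hxU
      exact ⟨y, hyU, hyx, hy⟩

namespace IsCBRank

variable {f : X → Ordinal.{u}} (hf : IsCBRank t f)
include hf

theorem ptRank_eq : ptRank t = f := by
  funext x
  simp only [ptRank, isCBRank_iff.1 hf, mem_ofPred_eq, not_le, Order.lt_add_one_iff]
  exact csInf_Ici

theorem isScattered : IsScattered t := by
  intro A hA
  obtain ⟨x, hxA, hmin⟩ := (InvImage.wf f wellFounded_lt).has_min A hA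
  obtain ⟨U, hU, hxU, hlt⟩ := hf.exists_isOpen_lt x
  refine ⟨x, hxA, U, hU, subset_antisymm (fun y hy => ?_) (singleton_subset_iff.2 ⟨hxU, hxA⟩)⟩
  by_contra hyx
  exact hmin y hy.2 (hlt y hy.1 hyx)

theorem exists_eq_of_lt {x : X} {U : Set X} (hU : IsOpen[t] U) (hxU : x ∈ U)
    {μ : Ordinal.{u}} (hμ : μ < f x) : ∃ y ∈ U, y ≠ x ∧ f y = μ := by
  obtain ⟨U₀, hU₀, hxU₀, hlt₀⟩ := hf.exists_isOpen_lt x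
  have hV : IsOpen[t] (U ∩ U₀) := hU.inter hU₀
  obtain ⟨y, hyV, hyx, hy⟩ := hf.exists_le_of_lt x _ hV ⟨hxU, hxU₀⟩ μ hμ
  obtain ⟨z, ⟨hzV, hzx, hz⟩, hmin⟩ := (InvImage.wf f wellFounded_lt).has_min
    {y | y ∈ U ∩ U₀ ∧ y ≠ x ∧ μ ≤ f y} ⟨y, hyV, hyx, hy⟩
  refine ⟨z, hzV.1, hzx, hz.antisymm' (le_of_not_gt fun hμz => ?_)⟩
  -- a point of rank `≥ μ` near `z` has smaller rank than `z`, contradicting minimality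
  obtain ⟨U₁, hU₁, hzU₁, hlt₁⟩ := hf.exists_isOpen_lt z
  obtain ⟨w, ⟨hwV, hwU₁⟩, hwz, hw⟩ :=
    hf.exists_le_of_lt z _ (hV.inter hU₁) ⟨hzV, hzU₁⟩ μ hμz
  have hwx : w ≠ x := by
    rintro rfl
    exact (hlt₀ z hzV.2 hzx).not_gt (hlt₁ w hwU₁ hwz)
  exact hmin w ⟨hwV, hwx, hw⟩ (hlt₁ w hwU₁ hwz)

end IsCBRank

theorem IsScattered.isCBRank_ptRank (hscat : IsScattered t) : IsCBRank t (ptRank t) :=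
  isCBRank_iff.2 <| dIter_eq_setOf_le fun a _ => by
    ext x
    rw [hscat.mem_dIter_add_one_iff, mem_ofPred_eq, Order.add_one_le_iff]

end CantorBendixson

section Refinement

variable {X : Type u} {t : TopologicalSpace X} {f : X → Ordinal.{u}}
  {B : Set (Set Ordinal.{u})} {g : Ordinal.{u} → Ordinal.{u}}

/-- A window is a member of `finiteInterClosure B`. -/
def HasStrictWindow (B : Set (Set Ordinal.{u})) (g : Ordinal.{u} → Ordinal.{u})
    (ρ : Ordinal.{u}) : Prop :=
  ∃ P ∈ finiteInterClosure B, ρ ∈ P ∧ g '' (P ∩ Iio ρ) ⊆ Iio (g ρ)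

def WindowsCover (B : Set (Set Ordinal.{u})) (g : Ordinal.{u} → Ordinal.{u})
    (ρ : Ordinal.{u}) : Prop :=
  ∀ P ∈ finiteInterClosure B, ρ ∈ P → Iio (g ρ) ⊆ g '' (P ∩ Iio ρ)

theorem isOpen_inf_generateFrom_preimage {P : Set Ordinal.{u}}
    (hP : P ∈ finiteInterClosure B) : IsOpen[t ⊓ generateFrom ((f ⁻¹' ·) '' B)] (f ⁻¹' P) := by
  induction hP with
  | basic h => exact (isOpen_generateFrom_of_mem (mem_image_of_mem _ h)).mono inf_le_right
  | univ => exact @isOpen_univ _ (_)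
  | inter _ _ h₁ h₂ => exact @IsOpen.inter _ (_) _ _ h₁ h₂

theorem exists_subset_of_isOpen_inf_generateFrom_preimage {O : Set X}
    (hO : IsOpen[t ⊓ generateFrom ((f ⁻¹' ·) '' B)] O) {x : X} (hx : x ∈ O) :
    ∃ U, IsOpen[t] U ∧ x ∈ U ∧ ∃ P ∈ finiteInterClosure B, f x ∈ P ∧ U ∩ f ⁻¹' P ⊆ O := by
  rw [← generateFrom_setOfPred_isOpen t, ← generateFrom_union] at hO
  induction hO generalizing x with
  | basic s hs =>
    rcases hs with hs | ⟨P, hP, rfl⟩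
    · exact ⟨s, hs, hx, Set.univ, .univ, trivial, fun y hy => hy.1⟩
    · exact ⟨Set.univ, @isOpen_univ _ t, trivial, P, .basic hP, hx, fun y hy => hy.2⟩
  | univ => exact ⟨Set.univ, @isOpen_univ _ t, trivial, Set.univ, .univ, trivial, subset_univ _⟩
  | inter s₁ s₂ _ _ ih₁ ih₂ =>
    obtain ⟨U₁, hU₁, hxU₁, P₁, hP₁, hxP₁, hs₁⟩ := ih₁ hx.1
    obtain ⟨U₂, hU₂, hxU₂, P₂, hP₂, hxP₂, hs₂⟩ := ih₂ hx.2
    refine ⟨U₁ ∩ U₂, @IsOpen.inter _ t _ _ hU₁ hU₂, ⟨hxU₁, hxU₂⟩, P₁ ∩ P₂, .inter hP₁ hP₂,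
      ⟨hxP₁, hxP₂⟩, fun y hy => ⟨hs₁ ⟨hy.1.1, hy.2.1⟩, hs₂ ⟨hy.1.2, hy.2.2⟩⟩⟩
  | sUnion S _ ih =>
    obtain ⟨s, hs, hxs⟩ := hx
    obtain ⟨U, hU, hxU, P, hP, hxP, hsub⟩ := ih s hs hxs
    exact ⟨U, hU, hxU, P, hP, hxP, hsub.trans (subset_sUnion_of_mem hs)⟩

theorem IsCBRank.inf_generateFrom_preimage (hf : IsCBRank t f)
    (h₁ : ∀ ρ, HasStrictWindow B g ρ) (h₂ : ∀ ρ, WindowsCover B g ρ) :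
    IsCBRank (t ⊓ generateFrom ((f ⁻¹' ·) '' B)) (g ∘ f) := by
  constructor
  · intro x
    obtain ⟨U, hU, hxU, hlt⟩ := hf.exists_isOpen_lt x
    obtain ⟨P, hP, hxP, hPlt⟩ := h₁ (f x)
    refine ⟨U ∩ f ⁻¹' P, @IsOpen.inter _ (_) _ _ (hU.mono inf_le_left)
      (isOpen_inf_generateFrom_preimage hP), ⟨hxU, hxP⟩,
      fun y hy hyx => hPlt ⟨f y, ⟨hy.2, hlt y hy.1 hyx⟩, rfl⟩⟩
  · intro x O hO hxO η hη
    obtain ⟨U, hU, hxU, P, hP, hxP, hsub⟩ :=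
      exists_subset_of_isOpen_inf_generateFrom_preimage hO hxO
    obtain ⟨μ, ⟨hμP, hμ⟩, rfl⟩ := h₂ (f x) P hP hxP hη
    obtain ⟨y, hyU, hyx, rfl⟩ := hf.exists_eq_of_lt hU hxU hμ
    exact ⟨y, hsub ⟨hyU, hμP⟩, hyx, le_rfl⟩

end Refinement

/-! ### The end logarithm and initial functions -/

namespace Ordinal

theorem exists_eq_add_omega0_opow {x : Ordinal} (hx : x ≠ 0) :
    ∃ γ e : Ordinal, x = γ + ω ^ e := by
  induction x using WellFoundedLT.induction with
  | _ x IH =>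
    have hle : ω ^ Ordinal.log ω x ≤ x := opow_log_le_self ω hx
    by_cases h : x - ω ^ Ordinal.log ω x = 0
    · exact ⟨0, _, by rw [zero_add]; exact le_antisymm (Ordinal.sub_eq_zero_iff_le.1 h) hle⟩
    · obtain ⟨γ, e, he⟩ := IH _ (isLeast_sub_lt_omega0_opow_log hx).1 h
      exact ⟨_ + γ, e, by rw [add_assoc, ← he, Ordinal.add_sub_cancel_of_le hle]⟩

theorem add_lt_omega0_opow {a b e : Ordinal} (ha : a < ω ^ e) (hb : b < ω ^ e) :
    a + b < ω ^ e :=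
  isPrincipal_add_omega0_opow e ha hb

theorem add_omega0_opow_lt_add_omega0_opow {a γ b e : Ordinal} (ha : a < γ + ω ^ e)
    (hb : b < e) : a + ω ^ b < γ + ω ^ e := by
  obtain ⟨d, hd, had⟩ := (lt_add_iff (opow_ne_zero e omega0_ne_zero)).1 ha
  calc a + ω ^ b ≤ γ + (d + ω ^ b) := by rw [← add_assoc]; gcongr
    _ < γ + ω ^ e := (add_lt_add_iff_left γ).2
      (add_lt_omega0_opow hd ((opow_lt_opow_iff_right one_lt_omega0).2 hb))

theorem eq_of_add_omega0_opow_eq {γ a e b : Ordinal} (h : γ + ω ^ e = a + ω ^ b) : e = b := by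
  have hlt : ∀ {γ a e b : Ordinal}, γ + ω ^ e = a + ω ^ b → ¬ b < e := fun h hb =>
    (add_omega0_opow_lt_add_omega0_opow (h ▸ lt_add_of_pos_right _ (opow_pos _ omega0_pos))
      hb).ne h.symm
  exact le_antisymm (not_lt.1 (hlt h)) (not_lt.1 (hlt h.symm))

theorem induction_add_omega0_opow {motive : Ordinal → Prop} (zero : motive 0) (one : motive 1)
    (opow : ∀ e : Ordinal, e ≠ 0 → (∀ ζ < ω ^ e, motive ζ) → motive (ω ^ e))
    (add : ∀ γ δ, γ < γ + δ → δ < γ + δ → motive γ → motive δ → motive (γ + δ))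
    (a : Ordinal) : motive a := by
  induction a using WellFoundedLT.induction with
  | _ a IH =>
    rcases eq_or_ne a 0 with rfl | ha
    · exact zero
    obtain ⟨γ, e, rfl⟩ := exists_eq_add_omega0_opow ha
    have hγ : γ < γ + ω ^ e := lt_add_of_pos_right γ (opow_pos e omega0_pos)
    rcases (le_add_self : ω ^ e ≤ γ + ω ^ e).lt_or_eq with he | he
    · exact add γ _ hγ he (IH γ hγ) (IH _ he)
    rw [← he] at IH ⊢
    rcases eq_or_ne e 0 with rfl | he0
    · rw [opow_zero]
      exact one
    · exact opow e he0 IH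

end Ordinal

theorem ellFun_zero : ellFun (0 : Ordinal.{u}) = 0 := if_pos rfl

theorem ellFun_add_omega0_opow (γ e : Ordinal.{u}) : ellFun (γ + ω ^ e) = e := by
  have hpos : 0 < γ + ω ^ e := (opow_pos e omega0_pos).trans_le le_add_self
  have hexp : {b | ∃ a, γ + ω ^ e = a + ω ^ b} = {e} :=
    eq_singleton_iff_unique_mem.2 ⟨⟨γ, rfl⟩, fun _ ⟨_, h⟩ => (eq_of_add_omega0_opow_eq h).symm⟩
  rw [ellFun, if_neg hpos.ne', hexp, csInf_singleton]

theorem ellFun_omega0_opow (e : Ordinal.{u}) : ellFun (ω ^ e) = e := by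
  simpa using ellFun_add_omega0_opow 0 e

theorem exists_eq_add_omega0_opow_ellFun {x : Ordinal.{u}} (hx : x ≠ 0) :
    ∃ γ, x = γ + ω ^ ellFun x := by
  obtain ⟨γ, e, rfl⟩ := exists_eq_add_omega0_opow hx
  exact ⟨γ, by rw [ellFun_add_omega0_opow]⟩

theorem omega0_opow_ellFun_le {x : Ordinal.{u}} (hx : x ≠ 0) : ω ^ ellFun x ≤ x := by
  obtain ⟨γ, hγ⟩ := exists_eq_add_omega0_opow_ellFun hx
  calc ω ^ ellFun x ≤ γ + ω ^ ellFun x := le_add_self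
    _ = x := hγ.symm

theorem ellFun_le_self (x : Ordinal.{u}) : ellFun x ≤ x := by
  rcases eq_or_ne x 0 with rfl | hx
  · rw [ellFun_zero]
  · exact (right_le_opow _ one_lt_omega0).trans (omega0_opow_ellFun_le hx)

theorem ellFun_add (γ : Ordinal.{u}) {z : Ordinal.{u}} (hz : z ≠ 0) :
    ellFun (γ + z) = ellFun z := by
  obtain ⟨δ, hδ⟩ := exists_eq_add_omega0_opow_ellFun hz
  rw [hδ, ← add_assoc, ellFun_add_omega0_opow, ellFun_add_omega0_opow]

theorem ellFun_lt_of_lt_add_omega0_opow {γ μ e : Ordinal.{u}} (h₁ : γ < μ)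
    (h₂ : μ < γ + ω ^ e) : ellFun μ < e := by
  have hμ : γ + (μ - γ) = μ := Ordinal.add_sub_cancel_of_le h₁.le
  have hz : μ - γ ≠ 0 := fun h => h₁.ne (by rwa [h, add_zero] at hμ)
  rw [← hμ, ellFun_add γ hz]
  exact (opow_lt_opow_iff_right one_lt_omega0).1 ((omega0_opow_ellFun_le hz).trans_lt
    (Ordinal.sub_lt_of_lt_add h₂ (opow_pos e omega0_pos)))

theorem exists_ellFun_eq {a ρ η : Ordinal.{u}} (ha : a < ρ) (hη : η < ellFun ρ) :
    ∃ μ, a < μ ∧ μ < ρ ∧ ellFun μ = η := by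
  have hρ : ρ ≠ 0 := by
    rintro rfl
    simp [ellFun_zero] at hη
  obtain ⟨γ, hγ⟩ := exists_eq_add_omega0_opow_ellFun hρ
  refine ⟨a + ω ^ η, lt_add_of_pos_right a (opow_pos η omega0_pos), ?_,
    ellFun_add_omega0_opow a η⟩
  rw [hγ] at ha ⊢
  exact add_omega0_opow_lt_add_omega0_opow ha hη

theorem omega0_opow_eq_self_of_ellFun_eq_self {x : Ordinal.{u}} (hx : x ≠ 0)
    (h : ellFun x = x) : ω ^ x = x :=
  le_antisymm (by simpa only [h] using omega0_opow_ellFun_le hx) (right_le_opow x one_lt_omega0)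

theorem isInitialFun_iff {f : Ordinal.{u} → Ordinal.{u}} :
    IsInitialFun f ↔ ∀ x, ∀ c < f x, ∃ y < x, f y = c := by
  constructor
  · intro hf x c hc
    obtain ⟨o, ho⟩ := hf (x + 1)
    have hfx : f x ∈ f '' Iio (x + 1) := mem_image_of_mem f (lt_add_one x)
    rw [ho] at hfx
    obtain ⟨y, hy, rfl⟩ : c ∈ f '' Iio (x + 1) := ho ▸ hc.trans hfx
    exact ⟨y, (Order.lt_add_one_iff.1 hy).lt_of_ne (by rintro rfl; exact hc.false), rfl⟩
  · intro hf o
    have hlower : IsLowerSet (f '' Iio o) := by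
      rintro _ c' hc' ⟨y, hy, rfl⟩
      rcases hc'.lt_or_eq with hc' | rfl
      · obtain ⟨z, hz, rfl⟩ := hf y c' hc'
        exact mem_image_of_mem f (hz.trans hy)
      · exact mem_image_of_mem f hy
    refine hlower.eq_univ_or_Iio.resolve_left fun huniv => ?_
    obtain ⟨b, hb⟩ := bddAbove_of_small (s := f '' Iio o)
    exact (lt_add_one b).not_ge (hb (huniv ▸ mem_univ (b + 1)))

namespace IsInitialFun

variable {f g : Ordinal.{u} → Ordinal.{u}}

theorem exists_lt_eq (hf : IsInitialFun f) {x c : Ordinal.{u}} (hc : c < f x) :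
    ∃ y < x, f y = c :=
  isInitialFun_iff.1 hf x c hc

theorem le_self (hf : IsInitialFun f) (x : Ordinal.{u}) : f x ≤ x := by
  induction x using WellFoundedLT.induction with
  | _ x IH =>
    by_contra! hx
    obtain ⟨y, hy, hfy⟩ := hf.exists_lt_eq hx
    exact (IH y hy).not_gt (hfy ▸ hy)

theorem map_zero (hf : IsInitialFun f) : f 0 = 0 :=
  nonpos_iff_eq_zero.1 (hf.le_self 0)

theorem comp (hf : IsInitialFun f) (hg : IsInitialFun g) : IsInitialFun (f ∘ g) := by
  refine isInitialFun_iff.2 fun x c hc => ?_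
  obtain ⟨y', hy', rfl⟩ := hf.exists_lt_eq hc
  obtain ⟨y, hy, rfl⟩ := hg.exists_lt_eq hy'
  exact ⟨y, hy, rfl⟩

end IsInitialFun

theorem isInitialFun_id : IsInitialFun (id : Ordinal.{u} → Ordinal.{u}) :=
  isInitialFun_iff.2 fun _ c hc => ⟨c, hc, rfl⟩

theorem isInitialFun_ellFun : IsInitialFun (ellFun : Ordinal.{u} → Ordinal.{u}) := by
  refine isInitialFun_iff.2 fun x c hc => ?_
  have hx : 0 < x := by
    refine pos_iff_ne_zero.2 fun hx => ?_
    simp [hx, ellFun_zero] at hc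
  obtain ⟨μ, -, hμ, rfl⟩ := exists_ellFun_eq hx hc
  exact ⟨μ, hμ, rfl⟩

namespace IsHyperlogFamily

variable {L : Ordinal.{u} → Ordinal.{u} → Ordinal.{u}} (hL : IsHyperlogFamily L)
include hL

theorem isInitialFun (a : Ordinal.{u}) : IsInitialFun (L a) := hL.1 a

theorem one_eq : L 1 = ellFun := hL.2.1

theorem add_apply (a b x : Ordinal.{u}) : L (a + b) x = L b (L a x) :=
  congrFun (hL.2.2.1 a b) x

theorem apply_le (a x : Ordinal.{u}) : L a x ≤ x := (hL.isInitialFun a).le_self x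

theorem apply_zero (a : Ordinal.{u}) : L a 0 = 0 := (hL.isInitialFun a).map_zero

theorem zero_apply (x : Ordinal.{u}) : L 0 x = x := by
  have h := hL.add_apply 1 0 (ω ^ x)
  rwa [add_zero, hL.one_eq, ellFun_omega0_opow, eq_comm] at h

theorem apply_anti {a b : Ordinal.{u}} (h : a ≤ b) (x : Ordinal.{u}) : L b x ≤ L a x := by
  rw [← Ordinal.add_sub_cancel_of_le h, hL.add_apply]
  exact hL.apply_le _ _

theorem apply_apply_of_add_eq {ξ a : Ordinal.{u}} (h : ξ + a = a) (x : Ordinal.{u}) :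
    L a (L ξ x) = L a x := by
  rw [← hL.add_apply, h]

theorem le_of_family {M : Ordinal.{u} → Ordinal.{u} → Ordinal.{u}}
    (hM : ∀ a, IsInitialFun (M a)) (hM1 : M 1 = ellFun)
    (hMadd : ∀ a b x, M (a + b) x = M b (M a x)) (a x : Ordinal.{u}) : M a x ≤ L a x :=
  hL.2.2.2 M hM hM1 (fun a b => funext (hMadd a b)) a x

end IsHyperlogFamily

/-! ### The canonical family of hyperlogarithms -/

namespace Hyperlog

/-- The order type of `{w ∈ S | w < z}`. -/
def rankIn (S : Set Ordinal.{u}) (z : Ordinal.{u}) : Ordinal.{u} :=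
  ⨆ w : {w // w ∈ S ∧ w < z}, rankIn S w.1 + 1
termination_by z
decreasing_by exact w.2.2

instance (S : Set Ordinal.{u}) (z : Ordinal.{u}) : Small.{u} {w // w ∈ S ∧ w < z} :=
  small_of_injective (f := fun w => (⟨w.1, w.2.2⟩ : Iio z)) fun _ _ h =>
    Subtype.ext (by simpa using congrArg Subtype.val h)

section RankIn

variable {S : Set Ordinal.{u}}

theorem rankIn_lt_rankIn {w z : Ordinal.{u}} (hw : w ∈ S) (hwz : w < z) :
    rankIn S w < rankIn S z := by
  conv_rhs => rw [rankIn]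
  exact (lt_add_one _).trans_le (Ordinal.le_iSup (fun w : {w // w ∈ S ∧ w < z} =>
    rankIn S w.1 + 1) ⟨w, hw, hwz⟩)

theorem rankIn_le_self (z : Ordinal.{u}) : rankIn S z ≤ z := by
  induction z using WellFoundedLT.induction with
  | _ z IH =>
    rw [rankIn]
    exact Ordinal.iSup_le fun w => Order.add_one_le_of_lt ((IH w.1 w.2.2).trans_lt w.2.2)

theorem exists_rankIn_eq {z c : Ordinal.{u}} (hc : c < rankIn S z) :
    ∃ w ∈ S, w < z ∧ rankIn S w = c := by
  induction z using WellFoundedLT.induction with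
  | _ z IH =>
    rw [rankIn] at hc
    obtain ⟨⟨w, hwS, hwz⟩, hcw⟩ := Ordinal.lt_iSup_iff.1 hc
    rcases (Order.lt_add_one_iff.1 hcw).lt_or_eq with hcw | rfl
    · obtain ⟨w', hw'S, hw'w, rfl⟩ := IH w hwz hcw
      exact ⟨w', hw'S, hw'w.trans hwz, rfl⟩
    · exact ⟨w, hwS, hwz, rfl⟩

end RankIn

/-- The members below `ω ^ e` of a would-be family of hyperlogarithms. -/
structure IsFamilyBelow (F : Ordinal.{u} → Ordinal.{u} → Ordinal.{u}) (e : Ordinal.{u}) :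
    Prop where
  add_apply : ∀ ζ < ω ^ e, ∀ δ < ω ^ e, ∀ x, F (ζ + δ) x = F δ (F ζ x)
  apply_le : ∀ ζ < ω ^ e, ∀ x, F ζ x ≤ x

def stabilize (F : Ordinal.{u} → Ordinal.{u} → Ordinal.{u}) (e x : Ordinal.{u}) : Ordinal.{u} :=
  sInf ((F · x) '' Iio (ω ^ e))

def fixedPoints (F : Ordinal.{u} → Ordinal.{u} → Ordinal.{u}) (e : Ordinal.{u}) :
    Set Ordinal.{u} :=
  {z | ∀ ζ < ω ^ e, F ζ z = z}

/-- The largest initial function invariant under all `F ζ`, `ζ < ω ^ e` (see `le_collapse`):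
it counts the common fixed points of the `F ζ` below the eventual value of `F ζ x`. -/
def collapse (F : Ordinal.{u} → Ordinal.{u} → Ordinal.{u}) (e x : Ordinal.{u}) : Ordinal.{u} :=
  rankIn (fixedPoints F e) (stabilize F e x)

section Collapse

variable {F G : Ordinal.{u} → Ordinal.{u} → Ordinal.{u}} {e : Ordinal.{u}}

theorem collapse_congr (h : ∀ ζ < ω ^ e, F ζ = G ζ) : collapse F e = collapse G e := by
  have hfix : fixedPoints F e = fixedPoints G e := by
    ext z
    exact forall₂_congr fun ζ hζ => by rw [h ζ hζ]
  have hstab : stabilize F e = stabilize G e :=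
    funext fun x => congrArg sInf (image_congr fun ζ hζ => by rw [h ζ hζ])
  funext x
  rw [collapse, collapse, hfix, hstab]

theorem exists_apply_eq_stabilize (F : Ordinal.{u} → Ordinal.{u} → Ordinal.{u})
    (e x : Ordinal.{u}) : ∃ ξ < ω ^ e, F ξ x = stabilize F e x :=
  csInf_mem (⟨F 0 x, 0, opow_pos e omega0_pos, rfl⟩ : ((F · x) '' Iio (ω ^ e)).Nonempty)

theorem stabilize_le_apply {ζ : Ordinal.{u}} (hζ : ζ < ω ^ e) (x : Ordinal.{u}) :
    stabilize F e x ≤ F ζ x :=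
  csInf_le' ⟨ζ, hζ, rfl⟩

theorem stabilize_of_mem {z : Ordinal.{u}} (hz : z ∈ fixedPoints F e) : stabilize F e z = z := by
  obtain ⟨ξ, hξ, hξz⟩ := exists_apply_eq_stabilize F e z
  rw [← hξz, hz ξ hξ]

namespace IsFamilyBelow

variable (hF : IsFamilyBelow F e)
include hF

theorem stabilize_le_self (x : Ordinal.{u}) : stabilize F e x ≤ x :=
  (stabilize_le_apply (opow_pos e omega0_pos) x).trans (hF.apply_le 0 (opow_pos e omega0_pos) x)

theorem stabilize_mem_fixedPoints (x : Ordinal.{u}) : stabilize F e x ∈ fixedPoints F e := by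
  intro ζ hζ
  obtain ⟨ξ, hξ, hξx⟩ := exists_apply_eq_stabilize F e x
  refine le_antisymm (hF.apply_le ζ hζ _) ?_
  calc stabilize F e x ≤ F (ξ + ζ) x := stabilize_le_apply (add_lt_omega0_opow hξ hζ) x
    _ = F ζ (stabilize F e x) := by rw [hF.add_apply ξ hξ ζ hζ, hξx]

theorem stabilize_apply {ζ : Ordinal.{u}} (hζ : ζ < ω ^ e) (x : Ordinal.{u}) :
    stabilize F e (F ζ x) = stabilize F e x := by
  refine le_antisymm ?_ (le_csInf ⟨_, 0, opow_pos e omega0_pos, rfl⟩ ?_)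
  · obtain ⟨ξ, hξ, hξx⟩ := exists_apply_eq_stabilize F e x
    -- `ζ + ξ = ξ + δ` with `δ < ω ^ e`, and `F δ` fixes the eventual value `F ξ x`
    have hδ : ξ + (ζ + ξ - ξ) = ζ + ξ := Ordinal.add_sub_cancel_of_le le_add_self
    have hδlt : ζ + ξ - ξ < ω ^ e :=
      (Ordinal.sub_le_self _ _).trans_lt (add_lt_omega0_opow hζ hξ)
    calc stabilize F e (F ζ x) ≤ F ξ (F ζ x) := stabilize_le_apply hξ _
      _ = F (ξ + (ζ + ξ - ξ)) x := by rw [hδ, hF.add_apply ζ hζ ξ hξ]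
      _ = stabilize F e x := by
        rw [hF.add_apply ξ hξ _ hδlt, hξx, hF.stabilize_mem_fixedPoints x _ hδlt]
  · rintro _ ⟨δ, hδ, rfl⟩
    exact (stabilize_le_apply (add_lt_omega0_opow hζ hδ) x).trans_eq (hF.add_apply ζ hζ δ hδ x)

theorem collapse_apply {ζ : Ordinal.{u}} (hζ : ζ < ω ^ e) (x : Ordinal.{u}) :
    collapse F e (F ζ x) = collapse F e x := by
  rw [collapse, collapse, hF.stabilize_apply hζ]

theorem collapse_le_self (x : Ordinal.{u}) : collapse F e x ≤ x :=
  (rankIn_le_self _).trans (hF.stabilize_le_self x)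

theorem isInitialFun_collapse : IsInitialFun (collapse F e) := by
  refine isInitialFun_iff.2 fun x c hc => ?_
  obtain ⟨w, hw, hwx, rfl⟩ := exists_rankIn_eq hc
  exact ⟨w, hwx.trans_le (hF.stabilize_le_self x), by rw [collapse, stabilize_of_mem hw]⟩

theorem le_collapse {f : Ordinal.{u} → Ordinal.{u}} (hf : IsInitialFun f)
    (hinv : ∀ ζ < ω ^ e, ∀ x, f (F ζ x) = f x) (x : Ordinal.{u}) : f x ≤ collapse F e x := by
  have hstab (y : Ordinal.{u}) : f (stabilize F e y) = f y := by
    obtain ⟨ξ, hξ, hξy⟩ := exists_apply_eq_stabilize F e y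
    rw [← hξy, hinv ξ hξ]
  have hfix : ∀ z ∈ fixedPoints F e, f z ≤ rankIn (fixedPoints F e) z := by
    intro z
    induction z using WellFoundedLT.induction with
    | _ z IH =>
      intro hz
      refine le_of_forall_lt fun c hc => ?_
      obtain ⟨y, hyz, rfl⟩ := hf.exists_lt_eq hc
      have hsy : stabilize F e y < z := (hF.stabilize_le_self y).trans_lt hyz
      rw [← hstab y]
      exact (IH _ hsy (hF.stabilize_mem_fixedPoints y)).trans_lt
        (rankIn_lt_rankIn (hF.stabilize_mem_fixedPoints y) hsy)
  rw [← hstab x]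
  exact hfix _ (hF.stabilize_mem_fixedPoints x)

theorem collapse_lt_collapse {ρ μ : Ordinal.{u}} (hρ : ρ ∈ fixedPoints F e) (hμ : μ < ρ) :
    collapse F e μ < collapse F e ρ := by
  rw [collapse, collapse, stabilize_of_mem hρ]
  exact rankIn_lt_rankIn (hF.stabilize_mem_fixedPoints μ) ((hF.stabilize_le_self μ).trans_lt hμ)

end IsFamilyBelow

end Collapse

def logStep (F : Ordinal.{u} → Ordinal.{u} → Ordinal.{u}) (e : Ordinal.{u}) :
    Ordinal.{u} → Ordinal.{u} :=
  if e = 0 then ellFun else collapse F e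

section LogStep

variable {F G : Ordinal.{u} → Ordinal.{u} → Ordinal.{u}} {e : Ordinal.{u}}

theorem logStep_congr (h : ∀ ζ < ω ^ e, F ζ = G ζ) : logStep F e = logStep G e := by
  rw [logStep, logStep, collapse_congr h]

theorem IsFamilyBelow.logStep_le (hF : IsFamilyBelow F e) (x : Ordinal.{u}) :
    logStep F e x ≤ x := by
  unfold logStep
  split_ifs
  exacts [ellFun_le_self x, hF.collapse_le_self x]

theorem IsFamilyBelow.isInitialFun_logStep (hF : IsFamilyBelow F e) :
    IsInitialFun (logStep F e) := by
  unfold logStep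
  split_ifs
  exacts [isInitialFun_ellFun, hF.isInitialFun_collapse]

end LogStep

def headOf (x : Ordinal.{u}) : Ordinal.{u} := sInf {γ | γ + ω ^ ellFun x = x}

theorem headOf_add {x : Ordinal.{u}} (hx : x ≠ 0) : headOf x + ω ^ ellFun x = x :=
  csInf_mem ((exists_eq_add_omega0_opow_ellFun hx).imp fun _ h => h.symm)

theorem headOf_lt {x : Ordinal.{u}} (hx : x ≠ 0) : headOf x < x :=
  (lt_add_of_pos_right _ (opow_pos _ omega0_pos)).trans_eq (headOf_add hx)

/-- The hyperlogarithms, built by recursion on the last term of the Cantor normal form. -/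
def canonHyperlog (a : Ordinal.{u}) : Ordinal.{u} → Ordinal.{u} :=
  if a = 0 then id
  else logStep (fun ζ => if ζ < a then canonHyperlog ζ else id) (ellFun a) ∘
    canonHyperlog (headOf a)
termination_by a
decreasing_by
  all_goals first
    | assumption
    | exact headOf_lt ‹_›

local notation "V" => canonHyperlog

theorem canonHyperlog_zero : V 0 = id := by
  rw [canonHyperlog, if_pos rfl]

theorem canonHyperlog_of_ne_zero {a : Ordinal.{u}} (ha : a ≠ 0) :
    V a = logStep V (ellFun a) ∘ V (headOf a) := by
  conv_lhs => rw [canonHyperlog, if_neg ha]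
  rw [logStep_congr fun ζ hζ => if_pos (hζ.trans_le (omega0_opow_ellFun_le ha))]

section Below

variable {e : Ordinal.{u}}
  (hV : ∀ δ < ω ^ e, (∀ x, V δ x ≤ x) ∧ ∀ a x, V (a + δ) x = V δ (V a x))
include hV

theorem isFamilyBelow_canonHyperlog_of : IsFamilyBelow V e :=
  ⟨fun ζ _ δ hδ x => (hV δ hδ).2 ζ x, fun ζ hζ x => (hV ζ hζ).1 x⟩

theorem logStep_canonHyperlog_apply {δ : Ordinal.{u}} (hδ : δ < ω ^ e) (x : Ordinal.{u}) :
    logStep V e (V δ x) = logStep V e x := by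
  rcases eq_or_ne e 0 with rfl | he
  · rw [opow_zero, Order.lt_one_iff] at hδ
    rw [hδ, canonHyperlog_zero, id]
  · rw [logStep, if_neg he]
    exact (isFamilyBelow_canonHyperlog_of hV).collapse_apply hδ x

/-- The recursion may use any decomposition `γ + ω ^ e`, not only the one through `headOf`. -/
theorem canonHyperlog_add_omega0_opow_of (γ : Ordinal.{u}) :
    V (γ + ω ^ e) = logStep V e ∘ V γ := by
  have hpos : 0 < ω ^ e := opow_pos e omega0_pos
  have key {γ₁ γ₂ : Ordinal.{u}} (hle : γ₁ ≤ γ₂) (heq : γ₁ + ω ^ e = γ₂ + ω ^ e) :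
      logStep V e ∘ V γ₁ = logStep V e ∘ V γ₂ := by
    obtain ⟨δ, rfl⟩ : ∃ δ, γ₂ = γ₁ + δ := ⟨γ₂ - γ₁, (Ordinal.add_sub_cancel_of_le hle).symm⟩
    have hδe : δ + ω ^ e = ω ^ e := by rwa [add_assoc, add_right_inj, eq_comm] at heq
    have hδ : δ < ω ^ e := lt_of_not_ge fun h =>
      ((lt_add_of_pos_right δ hpos).trans_eq hδe).not_ge h
    funext x
    rw [Function.comp_apply, Function.comp_apply, (hV δ hδ).2, logStep_canonHyperlog_apply hV hδ]
  have hne : γ + ω ^ e ≠ 0 := (hpos.trans_le le_add_self).ne'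
  have hhead := headOf_add hne
  rw [ellFun_add_omega0_opow] at hhead
  rw [canonHyperlog_of_ne_zero hne, ellFun_add_omega0_opow]
  rcases le_total (headOf (γ + ω ^ e)) γ with hle | hle
  · exact key hle hhead
  · exact (key hle hhead.symm).symm

end Below

theorem canonHyperlog_le_and_add (b : Ordinal.{u}) :
    (∀ x, V b x ≤ x) ∧ ∀ a x, V (a + b) x = V b (V a x) := by
  induction b using WellFoundedLT.induction with
  | _ b IH =>
    rcases eq_or_ne b 0 with rfl | hb
    · simp [canonHyperlog_zero]
    have hV : ∀ δ < ω ^ ellFun b, _ := fun δ hδ =>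
      IH δ (hδ.trans_le (omega0_opow_ellFun_le hb))
    have hhead := IH _ (headOf_lt hb)
    refine ⟨fun x => ?_, fun a x => ?_⟩
    · rw [canonHyperlog_of_ne_zero hb]
      exact ((isFamilyBelow_canonHyperlog_of hV).logStep_le _).trans (hhead.1 x)
    · calc V (a + b) x = V ((a + headOf b) + ω ^ ellFun b) x := by
            rw [add_assoc, headOf_add hb]
        _ = logStep V (ellFun b) (V (headOf b) (V a x)) := by
          rw [canonHyperlog_add_omega0_opow_of hV, Function.comp_apply, hhead.2]
        _ = V b (V a x) := by rw [canonHyperlog_of_ne_zero hb, Function.comp_apply]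

theorem canonHyperlog_add (a b x : Ordinal.{u}) : V (a + b) x = V b (V a x) :=
  (canonHyperlog_le_and_add b).2 a x

theorem isFamilyBelow_canonHyperlog (e : Ordinal.{u}) : IsFamilyBelow V e :=
  isFamilyBelow_canonHyperlog_of fun δ _ => canonHyperlog_le_and_add δ

theorem canonHyperlog_omega0_opow (e : Ordinal.{u}) : V (ω ^ e) = logStep V e := by
  simpa [canonHyperlog_zero] using
    canonHyperlog_add_omega0_opow_of (fun δ _ => canonHyperlog_le_and_add δ) 0

theorem canonHyperlog_one : canonHyperlog.{u} 1 = ellFun := by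
  simpa [logStep] using canonHyperlog_omega0_opow (0 : Ordinal.{u})

theorem isInitialFun_canonHyperlog (a : Ordinal.{u}) : IsInitialFun (V a) := by
  induction a using WellFoundedLT.induction with
  | _ a IH =>
    rcases eq_or_ne a 0 with rfl | ha
    · rw [canonHyperlog_zero]
      exact isInitialFun_id
    · rw [canonHyperlog_of_ne_zero ha]
      exact (isFamilyBelow_canonHyperlog _).isInitialFun_logStep.comp (IH _ (headOf_lt ha))

end Hyperlog

namespace IsHyperlogFamily

open Hyperlog

variable {L : Ordinal.{u} → Ordinal.{u} → Ordinal.{u}} (hL : IsHyperlogFamily L)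
include hL

theorem isFamilyBelow (e : Ordinal.{u}) : IsFamilyBelow L e :=
  ⟨fun ζ _ δ _ => hL.add_apply ζ δ, fun ζ _ => hL.apply_le ζ⟩

theorem eq_canonHyperlog : L = canonHyperlog := by
  funext a
  induction a using WellFoundedLT.induction with
  | _ a IH =>
    rcases eq_or_ne a 0 with rfl | ha
    · funext x
      rw [hL.zero_apply, canonHyperlog_zero, id]
    have hbelow : ∀ ζ < ω ^ ellFun a, L ζ = canonHyperlog ζ := fun ζ hζ =>
      IH ζ (hζ.trans_le (omega0_opow_ellFun_le ha))
    have hstep : L (ω ^ ellFun a) = logStep canonHyperlog (ellFun a) := by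
      rw [logStep]
      split_ifs with he
      · rw [he, opow_zero, hL.one_eq]
      funext y
      refine le_antisymm ?_ ?_
      · rw [← collapse_congr hbelow]
        exact (hL.isFamilyBelow _).le_collapse (hL.isInitialFun _)
          (fun ζ hζ => hL.apply_apply_of_add_eq (add_omega0_opow hζ)) y
      · have h := hL.le_of_family isInitialFun_canonHyperlog canonHyperlog_one
          canonHyperlog_add (ω ^ ellFun a) y
        rwa [canonHyperlog_omega0_opow, logStep, if_neg he] at h
    funext x
    conv_lhs => rw [← headOf_add ha, hL.add_apply, IH _ (headOf_lt ha), hstep]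
    rw [canonHyperlog_of_ne_zero ha, Function.comp_apply]

theorem omega0_opow_eq_collapse {e : Ordinal.{u}} (he : e ≠ 0) : L (ω ^ e) = collapse L e := by
  rw [hL.eq_canonHyperlog, canonHyperlog_omega0_opow, logStep, if_neg he]

theorem omega0_opow_apply_lt {e ρ μ : Ordinal.{u}} (he : e ≠ 0) (hρ : ρ ∈ fixedPoints L e)
    (hμ : μ < ρ) : L (ω ^ e) μ < L (ω ^ e) ρ := by
  rw [hL.omega0_opow_eq_collapse he]
  exact (hL.isFamilyBelow e).collapse_lt_collapse hρ hμ

theorem induction {motive : Ordinal.{u} → Ordinal.{u} → Prop} (zero : ∀ ρ, motive 0 ρ)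
    (one : ∀ ρ, motive 1 ρ) (add : ∀ γ δ ρ, motive γ ρ → motive δ (L γ ρ) → motive (γ + δ) ρ)
    (fixed : ∀ e : Ordinal.{u}, e ≠ 0 → ∀ ρ ∈ fixedPoints L e, motive (ω ^ e) ρ)
    (lam ρ : Ordinal.{u}) : motive lam ρ := by
  induction lam using Ordinal.induction_add_omega0_opow generalizing ρ with
  | zero => exact zero ρ
  | one => exact one ρ
  | opow e he IH =>
    induction ρ using WellFoundedLT.induction with
    | _ ρ IHρ =>
      by_cases hρ : ρ ∈ fixedPoints L e
      · exact fixed e he ρ hρ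
      -- some `L ξ`, `ξ < ω ^ e`, lowers `ρ`, and `ξ + ω ^ e = ω ^ e`
      obtain ⟨ξ, hξ, hξρ⟩ : ∃ ξ < ω ^ e, L ξ ρ ≠ ρ := by simpa [fixedPoints] using hρ
      have h := add ξ _ ρ (IH ξ hξ ρ) (IHρ _ ((hL.apply_le ξ ρ).lt_of_ne hξρ))
      rwa [add_omega0_opow hξ] at h
  | add γ δ _ _ hγ hδ => exact add γ δ ρ (hγ ρ) (hδ _)

end IsHyperlogFamily

/-! ### Windows of the Icard topology -/

theorem FiniteInter.preimage_mem_finiteInterClosure {α β : Type*} {S : Set (Set α)}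
    {T : Set (Set β)} {f : β → α} (h : ∀ P ∈ S, f ⁻¹' P ∈ T) {P : Set α}
    (hP : P ∈ finiteInterClosure S) : f ⁻¹' P ∈ finiteInterClosure T := by
  induction hP with
  | basic hP => exact .basic (h _ hP)
  | univ => exact .univ
  | inter _ _ h₁ h₂ => exact .inter h₁ h₂

/-- The intervals `(a, b]` of the paper, `[0, b]` standing for `a = -1`. -/
def ordIntervals : Set (Set Ordinal.{u}) :=
  {I | (∃ b, I = Iic b) ∨ ∃ a b, a < b ∧ I = Ioc a b}

theorem exists_Ioc_subset_of_mem_ordIntervals {I : Set Ordinal.{u}} (hI : I ∈ ordIntervals)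
    {ρ : Ordinal.{u}} (hρ : ρ ∈ I) (h0 : 0 < ρ) : ∃ a < ρ, Ioc a ρ ⊆ I := by
  rcases hI with ⟨b, rfl⟩ | ⟨a, b, -, rfl⟩
  · exact ⟨0, h0, Ioc_subset_Iic_self.trans (Iic_subset_Iic.2 hρ)⟩
  · exact ⟨a, hρ.1, Ioc_subset_Ioc_right hρ.2⟩

def icardBasic (L : Ordinal.{u} → Ordinal.{u} → Ordinal.{u}) (lam : Ordinal.{u}) :
    Set (Set Ordinal.{u}) :=
  {P | ∃ ξ < lam, ∃ I ∈ ordIntervals, P = L ξ ⁻¹' I}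

abbrev icardWindows (L : Ordinal.{u} → Ordinal.{u} → Ordinal.{u}) (lam : Ordinal.{u}) :
    Set (Set Ordinal.{u}) :=
  finiteInterClosure (icardBasic L lam)

theorem icardTop_eq {X : Type u} (L : Ordinal.{u} → Ordinal.{u} → Ordinal.{u})
    (t : TopologicalSpace X) (lam : Ordinal.{u}) :
    IcardTop L t lam = t ⊓ generateFrom ((ptRank t ⁻¹' ·) '' icardBasic L lam) := by
  rw [IcardTop]
  congr 2
  ext S
  simp only [icardBasic, ordIntervals, mem_image, mem_ofPred_eq]
  constructor
  · rintro ⟨ξ, hξ, ⟨b, rfl⟩ | ⟨a, b, hab, rfl⟩⟩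
    · exact ⟨_, ⟨ξ, hξ, _, Or.inl ⟨b, rfl⟩, rfl⟩, rfl⟩
    · exact ⟨_, ⟨ξ, hξ, _, Or.inr ⟨a, b, hab, rfl⟩, rfl⟩, rfl⟩
  · rintro ⟨_, ⟨ξ, hξ, _, ⟨b, rfl⟩ | ⟨a, b, hab, rfl⟩, rfl⟩, rfl⟩
    · exact ⟨ξ, hξ, Or.inl ⟨b, rfl⟩⟩
    · exact ⟨ξ, hξ, Or.inr ⟨a, b, hab, rfl⟩⟩

section Windows

variable {L : Ordinal.{u} → Ordinal.{u} → Ordinal.{u}}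

theorem preimage_mem_icardBasic {lam ξ : Ordinal.{u}} (hξ : ξ < lam) {I : Set Ordinal.{u}}
    (hI : I ∈ ordIntervals) : L ξ ⁻¹' I ∈ icardBasic L lam :=
  ⟨ξ, hξ, I, hI, rfl⟩

theorem icardWindows_mono {lam lam' : Ordinal.{u}} (h : lam ≤ lam') :
    icardWindows L lam ⊆ icardWindows L lam' := fun P hP => by
  simpa using preimage_mem_finiteInterClosure (f := id) (fun _ hP => by
    obtain ⟨ξ, hξ, I, hI, rfl⟩ := hP
    exact preimage_mem_icardBasic (hξ.trans_le h) hI) hP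

theorem eq_univ_of_mem_icardWindows_zero {P : Set Ordinal.{u}} (hP : P ∈ icardWindows L 0) :
    P = Set.univ := by
  induction hP with
  | basic hP =>
    obtain ⟨ξ, hξ, -⟩ := hP
    exact absurd hξ not_lt_zero
  | univ => rfl
  | inter _ _ h₁ h₂ => rw [h₁, h₂, univ_inter]

end Windows

namespace IsHyperlogFamily

open Hyperlog

variable {L : Ordinal.{u} → Ordinal.{u} → Ordinal.{u}} (hL : IsHyperlogFamily L)
include hL

theorem preimage_mem_icardWindows_add {γ δ : Ordinal.{u}} {P : Set Ordinal.{u}}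
    (hP : P ∈ icardWindows L δ) : L γ ⁻¹' P ∈ icardWindows L (γ + δ) := by
  refine preimage_mem_finiteInterClosure (fun _ hP => ?_) hP
  obtain ⟨ξ, hξ, I, hI, rfl⟩ := hP
  convert preimage_mem_icardBasic ((add_lt_add_iff_left γ).2 hξ) hI using 1
  ext x
  simp [hL.add_apply]

theorem exists_eq_inter_preimage_of_mem_icardWindows_add {γ δ : Ordinal.{u}}
    {P : Set Ordinal.{u}} (hP : P ∈ icardWindows L (γ + δ)) :
    ∃ P₁ ∈ icardWindows L γ, ∃ P₂ ∈ icardWindows L δ, P = P₁ ∩ L γ ⁻¹' P₂ := by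
  induction hP with
  | basic hP =>
    obtain ⟨ξ, hξ, I, hI, rfl⟩ := hP
    rcases lt_or_ge ξ γ with hξγ | hγξ
    · exact ⟨_, .basic (preimage_mem_icardBasic hξγ hI), Set.univ, .univ, by simp⟩
    have hδ : δ ≠ 0 := by
      rintro rfl
      exact hξ.not_ge (by simpa using hγξ)
    refine ⟨Set.univ, .univ, _, .basic (preimage_mem_icardBasic
      (Ordinal.sub_lt_of_lt_add hξ (pos_iff_ne_zero.2 hδ)) hI), ?_⟩
    ext x
    simp [← hL.add_apply, Ordinal.add_sub_cancel_of_le hγξ]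
  | univ => exact ⟨Set.univ, .univ, Set.univ, .univ, by simp⟩
  | inter _ _ ih₁ ih₂ =>
    obtain ⟨P₁, hP₁, P₂, hP₂, rfl⟩ := ih₁
    obtain ⟨Q₁, hQ₁, Q₂, hQ₂, rfl⟩ := ih₂
    exact ⟨P₁ ∩ Q₁, .inter hP₁ hQ₁, P₂ ∩ Q₂, .inter hP₂ hQ₂, by
      rw [preimage_inter, inter_inter_inter_comm]⟩

theorem exists_subset_of_mem_icardWindows {lam ρ : Ordinal.{u}} (hlam : 0 < lam) (hρ0 : 0 < ρ)
    (hfix : ∀ ζ < lam, L ζ ρ = ρ) {P : Set Ordinal.{u}} (hP : P ∈ icardWindows L lam)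
    (hρ : ρ ∈ P) : ∃ ξ < lam, ∃ a < ρ, Iic ρ ∩ L ξ ⁻¹' Ioi a ⊆ P := by
  induction hP with
  | basic hP =>
    obtain ⟨ξ, hξ, I, hI, rfl⟩ := hP
    rw [mem_preimage, hfix ξ hξ] at hρ
    obtain ⟨a, ha, hIoc⟩ := exists_Ioc_subset_of_mem_ordIntervals hI hρ hρ0
    exact ⟨ξ, hξ, a, ha, fun μ hμ => hIoc ⟨hμ.2, (hL.apply_le ξ μ).trans hμ.1⟩⟩
  | univ => exact ⟨0, hlam, 0, hρ0, subset_univ _⟩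
  | inter _ _ ih₁ ih₂ =>
    obtain ⟨ξ₁, hξ₁, a₁, ha₁, h₁⟩ := ih₁ hρ.1
    obtain ⟨ξ₂, hξ₂, a₂, ha₂, h₂⟩ := ih₂ hρ.2
    refine ⟨max ξ₁ ξ₂, max_lt hξ₁ hξ₂, max a₁ a₂, max_lt ha₁ ha₂, fun μ ⟨hμρ, hμ⟩ => ?_⟩
    have hμ' := max_lt_iff.1 (show max a₁ a₂ < L (max ξ₁ ξ₂) μ from hμ)
    exact ⟨h₁ ⟨hμρ, hμ'.1.trans_le (hL.apply_anti (le_max_left _ _) μ)⟩,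
      h₂ ⟨hμρ, hμ'.2.trans_le (hL.apply_anti (le_max_right _ _) μ)⟩⟩

theorem hasStrictWindow_zero (ρ : Ordinal.{u}) : HasStrictWindow (icardBasic L 0) (L 0) ρ := by
  refine ⟨Set.univ, .univ, trivial, ?_⟩
  rintro _ ⟨μ, ⟨-, hμ⟩, rfl⟩
  rwa [mem_Iio, hL.zero_apply, hL.zero_apply]

theorem windowsCover_zero (ρ : Ordinal.{u}) : WindowsCover (icardBasic L 0) (L 0) ρ := by
  intro P hP _ η hη
  rw [mem_Iio, hL.zero_apply] at hη
  exact ⟨η, ⟨(eq_univ_of_mem_icardWindows_zero hP).symm ▸ trivial, hη⟩, hL.zero_apply η⟩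

theorem hasStrictWindow_one (ρ : Ordinal.{u}) : HasStrictWindow (icardBasic L 1) (L 1) ρ := by
  rcases eq_or_ne ρ 0 with rfl | hρ
  · exact ⟨Set.univ, .univ, trivial, by simp⟩
  obtain ⟨γ, hγ⟩ := exists_eq_add_omega0_opow_ellFun hρ
  have hγρ : γ < ρ := hγ ▸ lt_add_of_pos_right γ (opow_pos _ omega0_pos)
  refine ⟨L 0 ⁻¹' Ioc γ ρ, .basic (preimage_mem_icardBasic zero_lt_one
    (Or.inr ⟨γ, ρ, hγρ, rfl⟩)), by simp [hL.zero_apply, hγρ], ?_⟩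
  rintro _ ⟨μ, ⟨hμP, hμ⟩, rfl⟩
  rw [mem_preimage, hL.zero_apply] at hμP
  rw [mem_Iio, hL.one_eq]
  exact ellFun_lt_of_lt_add_omega0_opow hμP.1 (hγ ▸ hμ)

theorem windowsCover_one (ρ : Ordinal.{u}) : WindowsCover (icardBasic L 1) (L 1) ρ := by
  intro P hP hρP η hη
  rw [mem_Iio, hL.one_eq] at hη
  have hρ : 0 < ρ := pos_iff_ne_zero.2 fun h => by simp [h, ellFun_zero] at hη
  obtain ⟨ξ, hξ, a, ha, hsub⟩ := hL.exists_subset_of_mem_icardWindows zero_lt_one hρ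
    (fun ζ hζ => by rw [Order.lt_one_iff.1 hζ, hL.zero_apply]) hP hρP
  rw [Order.lt_one_iff.1 hξ] at hsub
  obtain ⟨μ, haμ, hμρ, rfl⟩ := exists_ellFun_eq ha hη
  exact ⟨μ, ⟨hsub ⟨hμρ.le, by simpa [hL.zero_apply] using haμ⟩, hμρ⟩, by rw [hL.one_eq]⟩

theorem hasStrictWindow_add {γ δ ρ : Ordinal.{u}}
    (h₁ : HasStrictWindow (icardBasic L γ) (L γ) ρ)
    (h₂ : HasStrictWindow (icardBasic L δ) (L δ) (L γ ρ)) :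
    HasStrictWindow (icardBasic L (γ + δ)) (L (γ + δ)) ρ := by
  obtain ⟨P₁, hP₁, hρ₁, hlt₁⟩ := h₁
  obtain ⟨P₂, hP₂, hρ₂, hlt₂⟩ := h₂
  refine ⟨P₁ ∩ L γ ⁻¹' P₂, .inter (icardWindows_mono le_self_add hP₁)
    (hL.preimage_mem_icardWindows_add hP₂), ⟨hρ₁, hρ₂⟩, ?_⟩
  rintro _ ⟨μ, ⟨⟨hμ₁, hμ₂⟩, hμ⟩, rfl⟩
  rw [mem_Iio, hL.add_apply, hL.add_apply]
  exact hlt₂ ⟨_, ⟨hμ₂, hlt₁ ⟨μ, ⟨hμ₁, hμ⟩, rfl⟩⟩, rfl⟩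

theorem windowsCover_add {γ δ ρ : Ordinal.{u}} (h₁ : WindowsCover (icardBasic L γ) (L γ) ρ)
    (h₂ : WindowsCover (icardBasic L δ) (L δ) (L γ ρ)) :
    WindowsCover (icardBasic L (γ + δ)) (L (γ + δ)) ρ := by
  intro P hP hρ η hη
  obtain ⟨P₁, hP₁, P₂, hP₂, rfl⟩ := hL.exists_eq_inter_preimage_of_mem_icardWindows_add hP
  rw [mem_Iio, hL.add_apply] at hη
  obtain ⟨u, ⟨hu₂, hu⟩, rfl⟩ := h₂ P₂ hP₂ hρ.2 hη
  obtain ⟨μ, ⟨hμ₁, hμ⟩, rfl⟩ := h₁ P₁ hP₁ hρ.1 hu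
  exact ⟨μ, ⟨⟨hμ₁, hu₂⟩, hμ⟩, hL.add_apply γ δ μ⟩

theorem hasStrictWindow_of_mem_fixedPoints {e ρ : Ordinal.{u}} (he : e ≠ 0)
    (hρ : ρ ∈ fixedPoints L e) : HasStrictWindow (icardBasic L (ω ^ e)) (L (ω ^ e)) ρ := by
  refine ⟨Set.univ, .univ, trivial, ?_⟩
  rintro _ ⟨μ, ⟨-, hμ⟩, rfl⟩
  exact hL.omega0_opow_apply_lt he hρ hμ

theorem windowsCover_of_mem_fixedPoints {e ρ : Ordinal.{u}} (he : e ≠ 0)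
    (hρ : ρ ∈ fixedPoints L e) : WindowsCover (icardBasic L (ω ^ e)) (L (ω ^ e)) ρ := by
  intro P hP hρP η hη
  have h1 : 1 < ω ^ e := one_lt_omega0.trans_le (Ordinal.left_le_opow ω (pos_iff_ne_zero.2 he))
  have habs {ζ : Ordinal.{u}} (hζ : ζ < ω ^ e) (x : Ordinal.{u}) :
      L (ω ^ e) (L ζ x) = L (ω ^ e) x :=
    hL.apply_apply_of_add_eq (add_omega0_opow hζ) x
  have hρ0 : 0 < ρ := pos_iff_ne_zero.2 fun h => by simp [h, hL.apply_zero] at hη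
  have hρω : ω ^ ρ = ρ := by
    refine omega0_opow_eq_self_of_ellFun_eq_self hρ0.ne' ?_
    rw [← hL.one_eq]
    exact hρ 1 h1
  obtain ⟨ξ, hξ, a, ha, hsub⟩ :=
    hL.exists_subset_of_mem_icardWindows (opow_pos e omega0_pos) hρ0 hρ hP hρP
  obtain ⟨z, hzρ, rfl⟩ := (hL.isInitialFun _).exists_lt_eq hη
  -- `a + ω ^ z` has the same image as `z` under `L (ω ^ e) = L (ω ^ e) ∘ ellFun`
  have hw : a + ω ^ z < L ξ ρ := by
    rw [hρ ξ hξ, ← hρω]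
    exact add_lt_omega0_opow (by rwa [hρω]) ((opow_lt_opow_iff_right one_lt_omega0).2 hzρ)
  obtain ⟨μ, hμρ, hμw⟩ := (hL.isInitialFun ξ).exists_lt_eq hw
  refine ⟨μ, ⟨hsub ⟨hμρ.le, ?_⟩, hμρ⟩, ?_⟩
  · rw [mem_preimage, hμw]
    exact lt_add_of_pos_right a (opow_pos z omega0_pos)
  · rw [← habs hξ, hμw, ← habs h1, hL.one_eq, ellFun_add_omega0_opow]

theorem hasStrictWindow (lam ρ : Ordinal.{u}) :
    HasStrictWindow (icardBasic L lam) (L lam) ρ :=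
  hL.induction (motive := fun lam ρ => HasStrictWindow (icardBasic L lam) (L lam) ρ)
    hL.hasStrictWindow_zero hL.hasStrictWindow_one
    (fun _ _ _ => hL.hasStrictWindow_add) (fun _ he _ => hL.hasStrictWindow_of_mem_fixedPoints he)
    lam ρ

theorem windowsCover (lam ρ : Ordinal.{u}) : WindowsCover (icardBasic L lam) (L lam) ρ :=
  hL.induction (motive := fun lam ρ => WindowsCover (icardBasic L lam) (L lam) ρ)
    hL.windowsCover_zero hL.windowsCover_one (fun _ _ _ => hL.windowsCover_add)
    (fun _ he _ => hL.windowsCover_of_mem_fixedPoints he) lam ρ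

end IsHyperlogFamily

/-- For a scattered space `(X, τ)` and any ordinal `λ`, the space
`(X, τ_λ)` is scattered and its rank function is `ℓ^λ ∘ ρ_τ`. -/
theorem Icard_scattered_and_rank {X : Type u} (t : TopologicalSpace X)
    (hscat : IsScattered t)
    (L : Ordinal.{u} → Ordinal.{u} → Ordinal.{u}) (hL : IsHyperlogFamily L)
    (lam : Ordinal.{u}) :
    IsScattered (IcardTop L t lam) ∧
      ∀ x : X, ptRank (IcardTop L t lam) x = L lam (ptRank t x) := by
  have h := hscat.isCBRank_ptRank.inf_generateFrom_preimage (hL.hasStrictWindow lam)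
    (hL.windowsCover lam)
  rw [icardTop_eq]
  exact ⟨h.isScattered, fun x => congrFun h.ptRank_eq x⟩

end
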